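/- arXiv:1603.03982 — 2 statements merged into one kernel-verified Lean document; each statement's English description precedes it below -/
import Mathlib

section
/- Let $H$ be a complex Hilbert space, $A_0 : H \to H$ a bounded operator with one-dimensional kernel spanned by a unit vector $\Psi_0$, and one-dimensional cokernel: $\mathrm{Ker}(A_0^*) = \mathrm{span}\{\Phi_0\}$ with $\|\Phi_0\| = 1$. Suppose $\tilde{A}_0 = A_0 + P_0$ is invertible, where $P_0 x = \langle x, \Psi_0 \rangle \Phi_0$. Let $B$ be a bounded operator with $\|B\| < \|\tilde{A}_0^{-1}\|^{-1}$. Then a vector $\Psi = \Psi_0 + \Psi_1$ with $\langle \Psi_1, \Psi_0 \rangle = 0$ satisfies $(A_0 + B)\Psi = 0$ if and only if $\Psi_1 = (\tilde{A}_0 + B)^{-1}\Phi_0 - \Psi_0$ and $\langle (\tilde{A}_0 + B)^{-1}\Phi_0, \Psi_0 \rangle = 1$. -/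
/-! `A₀ + P₀ + B` is invertible by the Neumann series, and `P₀ Ψ = Φ₀` for every `Ψ = Ψ₀ + Ψ₁`
with `Ψ₁ ⊥ Ψ₀`, so `(A₀ + B) Ψ = 0` is equivalent to `(A₀ + P₀ + B) Ψ = Φ₀`, i.e. to
`Ψ = (A₀ + P₀ + B)⁻¹ Φ₀`. -/

open scoped InnerProductSpace

theorem IsUnit.add_of_norm_lt_inv_norm_ringInverse {R : Type*} [NormedRing R]
    [HasSummableGeomSeries R] {a b : R} (ha : IsUnit a) (hb : ‖b‖ < ‖Ring.inverse a‖⁻¹) :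
    IsUnit (a + b) := by
  obtain ⟨u, rfl⟩ := ha
  rw [Ring.inverse_unit] at hb
  exact (u.add b hb).isUnit

theorem ContinuousLinearMap.eq_ringInverse_apply_iff {R M : Type*} [Semiring R]
    [AddCommMonoid M] [TopologicalSpace M] [Module R M] {T : M →L[R] M} (hT : IsUnit T)
    {x y : M} : x = Ring.inverse T y ↔ T x = y := by
  obtain ⟨u, rfl⟩ := hT
  have hu : (u : M →L[R] M).IsInvertible := ⟨ContinuousLinearEquiv.unitsEquiv R M u, rfl⟩
  rw [ringInverse_eq_inverse, eq_comm, hu.inverse_apply_eq, eq_comm]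

section UnitVector

variable {𝕜 E : Type*} [RCLike 𝕜] [NormedAddCommGroup E] [InnerProductSpace 𝕜 E] {u w v : E}

theorem inner_add_right_eq_one_of_inner_eq_zero (hu : ‖u‖ = 1) (hw : ⟪u, w⟫_𝕜 = 0) :
    ⟪u, u + w⟫_𝕜 = 1 := by
  rw [inner_add_right, hw, add_zero, inner_self_eq_norm_sq_to_K, hu]
  norm_num

theorem add_eq_iff_eq_sub_and_inner_eq_one (hu : ‖u‖ = 1) (hw : ⟪u, w⟫_𝕜 = 0) :
    u + w = v ↔ w = v - u ∧ ⟪u, v⟫_𝕜 = 1 := by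
  constructor
  · rintro rfl
    exact ⟨(add_sub_cancel_left u w).symm, inner_add_right_eq_one_of_inner_eq_zero hu hw⟩
  · rintro ⟨rfl, -⟩
    exact add_sub_cancel u v

end UnitVector

theorem stmt2_general {H : Type*} [NormedAddCommGroup H] [InnerProductSpace ℂ H] [CompleteSpace H]
    (A₀ : H →L[ℂ] H) (Ψ₀ Φ₀ : H) (hΨ : ‖Ψ₀‖ = 1)
    (P₀ : H →L[ℂ] H) (hP : ∀ x, P₀ x = (⟪Ψ₀, x⟫_ℂ) • Φ₀)
    (hA : IsUnit (A₀ + P₀))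
    (B : H →L[ℂ] H) (hB : ‖B‖ < ‖Ring.inverse (A₀ + P₀)‖⁻¹)
    (Ψ₁ : H) (horth : ⟪Ψ₀, Ψ₁⟫_ℂ = 0) :
    (A₀ + B) (Ψ₀ + Ψ₁) = 0 ↔
      (Ψ₁ = Ring.inverse (A₀ + P₀ + B) Φ₀ - Ψ₀ ∧
       ⟪Ψ₀, Ring.inverse (A₀ + P₀ + B) Φ₀⟫_ℂ = 1) := by
  have hT : IsUnit (A₀ + P₀ + B) := hA.add_of_norm_lt_inv_norm_ringInverse hB
  have hPΨ : P₀ (Ψ₀ + Ψ₁) = Φ₀ := by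
    rw [hP, inner_add_right_eq_one_of_inner_eq_zero hΨ horth, one_smul]
  calc (A₀ + B) (Ψ₀ + Ψ₁) = 0 ↔ (A₀ + P₀ + B) (Ψ₀ + Ψ₁) = Φ₀ := by
        rw [add_right_comm, add_apply (A₀ + B) P₀, hPΨ, add_eq_right]
    _ ↔ Ψ₀ + Ψ₁ = Ring.inverse (A₀ + P₀ + B) Φ₀ :=
        (ContinuousLinearMap.eq_ringInverse_apply_iff hT).symm
    _ ↔ _ := add_eq_iff_eq_sub_and_inner_eq_one hΨ horth

/-- Reduction of the characteristic value problem `(A₀ + B)Ψ = 0` to the scalar equation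
`⟨(Ã₀ + B)⁻¹ Φ₀, Ψ₀⟩ = 1`, where `Ã₀ = A₀ + P₀`, `P₀ x = ⟨x, Ψ₀⟩Φ₀`, `Ker A₀ = span Ψ₀`,
`Ker A₀* = span Φ₀`, `Ã₀` invertible and `‖B‖ < ‖Ã₀⁻¹‖⁻¹`. -/
theorem stmt2 {H : Type*} [NormedAddCommGroup H] [InnerProductSpace ℂ H] [CompleteSpace H]
    (A₀ : H →L[ℂ] H) (Ψ₀ Φ₀ : H) (hΨ : ‖Ψ₀‖ = 1) (hΦ : ‖Φ₀‖ = 1)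
    (hker : LinearMap.ker (A₀ : H →ₗ[ℂ] H) = ℂ ∙ Ψ₀)
    (hcoker : LinearMap.ker ((ContinuousLinearMap.adjoint A₀ : H →L[ℂ] H) : H →ₗ[ℂ] H)
      = ℂ ∙ Φ₀)
    (P₀ : H →L[ℂ] H) (hP : ∀ x, P₀ x = (⟪Ψ₀, x⟫_ℂ) • Φ₀)
    (hA : IsUnit (A₀ + P₀))
    (B : H →L[ℂ] H) (hB : ‖B‖ < ‖Ring.inverse (A₀ + P₀)‖⁻¹)
    (Ψ₁ : H) (horth : ⟪Ψ₀, Ψ₁⟫_ℂ = 0) :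
    (A₀ + B) (Ψ₀ + Ψ₁) = 0 ↔
      (Ψ₁ = Ring.inverse (A₀ + P₀ + B) Φ₀ - Ψ₀ ∧
       ⟪Ψ₀, Ring.inverse (A₀ + P₀ + B) Φ₀⟫_ℂ = 1) :=
  stmt2_general A₀ Ψ₀ Φ₀ hΨ P₀ hP hA B hB Ψ₁ horth
end

section
/- Let $f(\omega) = \alpha \omega^2 \ln \omega + \beta \omega^2 - g$, where $\alpha > 0$ is real, $\beta \in \mathbb{C}$, and $g = g(\delta) = \kappa \delta$ for a constant $\kappa \neq 0$. Then for all sufficiently small $\delta > 0$, any root $\omega$ of $f$ with $|\omega| \to 0$ as $\delta \to 0$ satisfies $|\omega|^2 |\ln \omega| \asymp \delta$, i.e., there exist constants $0 < c_1 < c_2$ independent of $\delta$ such that $c_1 \delta \leq |\omega|^2 |\ln|\omega|| \leq c_2 \delta$. -/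
open Filter
open scoped Topology

/-!
Taking norms in `ω² (α log ω + β) = κ δ` gives `‖κ‖ δ = ‖ω‖² ‖α log ω + β‖`. Since
`log ω = log ‖ω‖ + i arg ω` with `|arg ω| ≤ π`, the factor `‖α log ω + β‖` differs from
`α |log ‖ω‖|` by at most `α π + ‖β‖`, while `|log ‖ω‖| → ∞` as `ω → 0`. Hence for small `δ`
the factor lies between `α |log ‖ω‖| / 2` and `2 α |log ‖ω‖|`, which gives the two bounds.
-/

namespace Complex

theorem norm_log_sub_log_norm_le_pi (z : ℂ) : ‖log z - (Real.log ‖z‖ : ℂ)‖ ≤ Real.pi := by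
  rw [log, add_sub_cancel_left, norm_mul, norm_I, mul_one, norm_real, Real.norm_eq_abs]
  exact abs_arg_le_pi z

theorem abs_norm_mul_log_add_sub_le {α : ℝ} (hα : 0 ≤ α) (β z : ℂ) :
    |‖(α : ℂ) * log z + β‖ - α * (|Real.log ‖z‖|)| ≤ α * Real.pi + ‖β‖ := by
  have hmain : ‖((α * Real.log ‖z‖ : ℝ) : ℂ)‖ = α * |Real.log ‖z‖| := by
    rw [norm_real, Real.norm_eq_abs, abs_mul, abs_of_nonneg hα]
  rw [← hmain]
  calc |‖(α : ℂ) * log z + β‖ - ‖((α * Real.log ‖z‖ : ℝ) : ℂ)‖|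
      ≤ ‖(α : ℂ) * log z + β - ((α * Real.log ‖z‖ : ℝ) : ℂ)‖ := abs_norm_sub_norm_le _ _
    _ = ‖(α : ℂ) * (log z - (Real.log ‖z‖ : ℂ)) + β‖ := by push_cast; ring_nf
    _ ≤ α * Real.pi + ‖β‖ := by
        refine (norm_add_le _ _).trans (add_le_add_left ?_ _)
        rw [norm_mul, norm_real, Real.norm_eq_abs, abs_of_nonneg hα]
        gcongr
        exact norm_log_sub_log_norm_le_pi z

theorem norm_mul_log_add_mem_Icc {α : ℝ} (hα : 0 ≤ α) {β z : ℂ}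
    (hz : 2 * (α * Real.pi + ‖β‖) ≤ α * |Real.log ‖z‖|) :
    ‖(α : ℂ) * log z + β‖ ∈ Set.Icc (α / 2 * |Real.log ‖z‖|) (2 * α * |Real.log ‖z‖|) := by
  have h := abs_le.mp (abs_norm_mul_log_add_sub_le hα β z)
  constructor <;> linarith [h.1, h.2]

end Complex

theorem Filter.Tendsto.abs_log_norm_atTop {X : Type*} {l : Filter X} {f : X → ℂ}
    (h0 : Tendsto f l (𝓝 0)) (hne : ∀ᶠ x in l, f x ≠ 0) :
    Tendsto (fun x => |Real.log ‖f x‖|) l atTop := by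
  have hnorm : Tendsto (fun x => ‖f x‖) l (𝓝[>] 0) :=
    tendsto_nhdsWithin_iff.mpr ⟨by simpa using h0.norm, hne.mono fun _ => norm_pos_iff.mpr⟩
  exact tendsto_abs_atBot_atTop.comp (Real.tendsto_log_nhdsGT_zero.comp hnorm)

section MinnaertEquation

variable {α δ : ℝ} {β κ z : ℂ}

theorem ne_zero_of_minnaert_root (hκ : κ ≠ 0) (hδ : δ ≠ 0)
    (hroot : (α : ℂ) * z ^ 2 * Complex.log z + β * z ^ 2 - κ * (δ : ℂ) = 0) : z ≠ 0 := by
  rintro rfl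
  simp_all

theorem norm_mul_eq_of_minnaert_root (hδ : 0 ≤ δ)
    (hroot : (α : ℂ) * z ^ 2 * Complex.log z + β * z ^ 2 - κ * (δ : ℂ) = 0) :
    ‖κ‖ * δ = ‖z‖ ^ 2 * ‖(α : ℂ) * Complex.log z + β‖ := by
  have hEq : κ * (δ : ℂ) = z ^ 2 * ((α : ℂ) * Complex.log z + β) := by
    linear_combination -hroot
  simpa [norm_mul, abs_of_nonneg hδ] using congrArg norm hEq

theorem minnaert_root_bounds (hα : 0 < α) (hδ : 0 ≤ δ)
    (hroot : (α : ℂ) * z ^ 2 * Complex.log z + β * z ^ 2 - κ * (δ : ℂ) = 0)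
    (hz : 2 * (α * Real.pi + ‖β‖) ≤ α * |Real.log ‖z‖|) :
    ‖κ‖ / (2 * α) * δ ≤ ‖z‖ ^ 2 * |Real.log ‖z‖| ∧
      ‖z‖ ^ 2 * |Real.log ‖z‖| ≤ 2 * ‖κ‖ / α * δ := by
  obtain ⟨hlo, hhi⟩ := Complex.norm_mul_log_add_mem_Icc hα.le hz
  have hnorm := norm_mul_eq_of_minnaert_root hδ hroot
  constructor
  · rw [div_mul_eq_mul_div, div_le_iff₀ (by positivity), hnorm]
    calc ‖z‖ ^ 2 * ‖(α : ℂ) * Complex.log z + β‖ ≤ ‖z‖ ^ 2 * (2 * α * |Real.log ‖z‖|) := by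
          gcongr
      _ = ‖z‖ ^ 2 * |Real.log ‖z‖| * (2 * α) := by ring
  · rw [div_mul_eq_mul_div, le_div_iff₀ hα]
    calc ‖z‖ ^ 2 * |Real.log ‖z‖| * α = 2 * (‖z‖ ^ 2 * (α / 2 * |Real.log ‖z‖|)) := by ring
      _ ≤ 2 * (‖z‖ ^ 2 * ‖(α : ℂ) * Complex.log z + β‖) := by gcongr
      _ = 2 * ‖κ‖ * δ := by rw [← hnorm]; ring

end MinnaertEquation

/-- Scaling of the two-dimensional Minnaert resonance: if `ω(δ)` is a root of
`α ω² ln ω + β ω² - κδ = 0` (for `δ > 0` small) tending to `0` as `δ → 0⁺`, then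
`|ω|² |ln|ω||` is comparable to `δ`: `c₁ δ ≤ |ω(δ)|² |ln|ω(δ)|| ≤ c₂ δ`. -/
theorem stmt16 (α : ℝ) (hα : 0 < α) (β κ : ℂ) (hκ : κ ≠ 0)
    (ω : ℝ → ℂ)
    (hroot : ∀ᶠ δ in 𝓝[>] (0 : ℝ),
      (α : ℂ) * ω δ ^ 2 * Complex.log (ω δ) + β * ω δ ^ 2 - κ * (δ : ℂ) = 0)
    (hω0 : Tendsto ω (𝓝[>] (0 : ℝ)) (𝓝 0)) :
    ∃ c₁ c₂ : ℝ, 0 < c₁ ∧ c₁ < c₂ ∧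
      ∀ᶠ δ in 𝓝[>] (0 : ℝ),
        c₁ * δ ≤ ‖ω δ‖ ^ 2 * |Real.log ‖ω δ‖| ∧
        ‖ω δ‖ ^ 2 * |Real.log ‖ω δ‖| ≤ c₂ * δ := by
  have hκ0 : 0 < ‖κ‖ := norm_pos_iff.mpr hκ
  refine ⟨‖κ‖ / (2 * α), 2 * ‖κ‖ / α, by positivity, ?_, ?_⟩
  · rw [div_lt_div_iff₀ (by positivity) hα]
    nlinarith
  have hne : ∀ᶠ δ in 𝓝[>] (0 : ℝ), ω δ ≠ 0 := by
    filter_upwards [hroot, self_mem_nhdsWithin] with δ hr hδ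
    exact ne_zero_of_minnaert_root hκ (ne_of_gt hδ) hr
  have hlarge : ∀ᶠ δ in 𝓝[>] (0 : ℝ), 2 * (α * Real.pi + ‖β‖) / α ≤ |Real.log ‖ω δ‖| :=
    (hω0.abs_log_norm_atTop hne).eventually_ge_atTop _
  filter_upwards [hroot, hlarge, self_mem_nhdsWithin] with δ hr hL hδ
  exact minnaert_root_bounds hα (le_of_lt hδ) hr ((div_le_iff₀' hα).mp hL)
end
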